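/- Let N ≥ 1 be an integer and h > 0, and let (ū_j, v̄_j)_{j∈ℤ} be N-periodic real data. For every λ ≠ 0 and every c ∈ ℝ, the damping coefficient is affine-invariant: σ̂_i computed (as in the context) from the transformed data (λū_j + c, λv̄_j)_{j∈ℤ} equals σ̂_i computed from (ū_j, v̄_j)_{j∈ℤ}, for every index i. -/

import Mathlib

/-- The jump functional `J0_{i+1/2}` of the reconstructed values across the interface
`x_{i+1/2}` (formula (eq:jump1) of the paper). -/
noncomputable def J0 (ub vb : ℤ → ℝ) (i : ℤ) : ℝ :=
  (-13 * ub (i - 1) - 31 * ub i + 31 * ub (i + 1) + 13 * ub (i + 2)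
    - 50 * vb (i - 1) - 370 * vb i - 370 * vb (i + 1) - 50 * vb (i + 2)) / 108

/-- The jump functional `J1_{i+1/2}` of the derivative of the reconstruction across the
interface `x_{i+1/2}`. -/
noncomputable def J1 (h : ℝ) (ub vb : ℤ → ℝ) (i : ℤ) : ℝ :=
  (-5 * ub (i - 1) + 5 * ub i + 5 * ub (i + 1) - 5 * ub (i + 2)
    - 22 * vb (i - 1) - 54 * vb i + 54 * vb (i + 1) + 22 * vb (i + 2)) / (36 * h)

/-- The global average `ū_Ω = (1/N) Σ_{j=1}^N ū_j` of the cell averages. -/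
noncomputable def uOmega (N : ℕ) (ub : ℤ → ℝ) : ℝ :=
  (1 / (N : ℝ)) * ∑ j ∈ Finset.Icc (1 : ℤ) (N : ℤ), ub j

/-- The global deviation `M = max_{1 ≤ j ≤ N} |ū_j - ū_Ω|`. -/
noncomputable def Mmax (N : ℕ) (hN : 1 ≤ N) (ub : ℤ → ℝ) : ℝ :=
  (Finset.Icc (1 : ℤ) (N : ℤ)).sup'
    (Finset.nonempty_Icc.mpr (by exact_mod_cast hN))
    (fun j => |ub j - uOmega N ub|)

/-- The scale-invariant damping coefficient `σ̂_i` of the OE procedure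
(formula (sec3:sigma_1d) of the paper). -/
noncomputable def sigmaHat (N : ℕ) (hN : 1 ≤ N) (h : ℝ) (ub vb : ℤ → ℝ) (i : ℤ) : ℝ :=
  if Mmax N hN ub = 0 then 0
  else (|J0 ub vb (i - 1)| + |J0 ub vb i|
    + h * |J1 h ub vb (i - 1)| + h * |J1 h ub vb i|) / Mmax N hN ub

/-- The zeroth-order moment after the OE procedure: the cell average is unchanged. -/
noncomputable def uSigma (ub : ℤ → ℝ) (i : ℤ) : ℝ := ub i

/-- The first-order moment after the OE procedure:
`v̄^σ_i = v̄_i · exp(-(αΔt/h)·σ̂_i)` (Theorem 2.1 of the paper). -/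
noncomputable def vSigma (N : ℕ) (hN : 1 ≤ N) (h α Δt : ℝ) (ub vb : ℤ → ℝ) (i : ℤ) : ℝ :=
  vb i * Real.exp (-(α * Δt / h) * sigmaHat N hN h ub vb i)

lemma J0_affine (ub vb : ℤ → ℝ) (lam c : ℝ) (i : ℤ) :
    J0 (fun j => lam * ub j + c) (fun j => lam * vb j) i = lam * J0 ub vb i := by
  simp only [J0]; ring

lemma J1_affine (h : ℝ) (ub vb : ℤ → ℝ) (lam c : ℝ) (i : ℤ) :
    J1 h (fun j => lam * ub j + c) (fun j => lam * vb j) i = lam * J1 h ub vb i := by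
  simp only [J1]; ring

lemma uOmega_affine (N : ℕ) (hN : 1 ≤ N) (ub : ℤ → ℝ) (lam c : ℝ) :
    uOmega N (fun j => lam * ub j + c) = lam * uOmega N ub + c := by
  have hNne : (N : ℝ) ≠ 0 := by positivity
  have hcard : (Finset.Icc (1 : ℤ) (N : ℤ)).card = N := by
    rw [Int.card_Icc]; simp
  simp only [uOmega, Finset.sum_add_distrib, Finset.sum_const, nsmul_eq_mul, hcard,
    ← Finset.mul_sum]
  field_simp

lemma Mmax_affine (N : ℕ) (hN : 1 ≤ N) (ub : ℤ → ℝ) (lam c : ℝ) :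
    Mmax N hN (fun j => lam * ub j + c) = |lam| * Mmax N hN ub := by
  unfold Mmax
  have hne := Finset.nonempty_Icc.mpr (by exact_mod_cast hN :
    (1 : ℤ) ≤ (N : ℤ))
  have h1 : ∀ j ∈ Finset.Icc (1 : ℤ) (N : ℤ),
      |(lam * ub j + c) - uOmega N (fun j => lam * ub j + c)|
        = |lam| * |ub j - uOmega N ub| := by
    intro j _
    rw [uOmega_affine N hN, ← abs_mul]
    ring_nf
  rw [Finset.sup'_congr hne rfl h1]
  exact (Finset.comp_sup'_eq_sup'_comp hne (fun x => |lam| * x)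
    (fun x y => mul_max_of_nonneg x y (abs_nonneg lam))).symm

/-- **Affine invariance of the damping coefficient** (core of Theorem 2.4 of the
paper): the damping coefficient `σ̂_i` computed from the affinely transformed data
`(λū_j + c, λv̄_j)` coincides with the one computed from `(ū_j, v̄_j)`, for every
`λ ≠ 0` and `c ∈ ℝ`. -/
theorem sigmaHat_affine_invariant
    (N : ℕ) (hN : 1 ≤ N) (h : ℝ) (hh : 0 < h)
    (ub vb : ℤ → ℝ)
    (hper : ∀ j : ℤ, ub (j + N) = ub j ∧ vb (j + N) = vb j) :
    ∀ (lam c : ℝ), lam ≠ 0 → ∀ i : ℤ,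
      sigmaHat N hN h (fun j => lam * ub j + c) (fun j => lam * vb j) i =
        sigmaHat N hN h ub vb i := by
  intro lam c hlam i
  have hM := Mmax_affine N hN ub lam c
  have hla : |lam| ≠ 0 := abs_ne_zero.mpr hlam
  simp only [sigmaHat, hM, J0_affine, J1_affine, abs_mul]
  by_cases hM0 : Mmax N hN ub = 0
  · simp [hM0]
  · rw [if_neg (by simpa [hla] using hM0), if_neg hM0]
    field_simp
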